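/- In the patient-proposing deferred-acceptance mechanism with n patients and n doctors, truth-telling is a dominant strategy for every patient: no patient can, by reporting a false strict preference list (while all other patients and all doctors report truthfully), obtain a doctor he strictly prefers (under his true preferences) to the doctor he obtains by reporting truthfully. -/

import Mathlib

/-!
Gale–Sotomayor blocking lemma: let `M` be the deferred-acceptance matching and `M'` any matching
such that the set `S` of patients strictly preferring `M'` to `M` is nonempty. Then `M'` has a
blocking pair whose patient lies outside `S`. If `M'(S) ≠ M(S)` this follows from the stability
of `M`; otherwise consider the patient of `S` who is the last to propose to his final partner `w`:
at that moment `w` rejects a patient outside `S` who blocks `M'` together with `w`.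

If `p0` gained by misreporting, apply this to `M'` = the outcome under the misreport. The patient of
the blocking pair is not `p0 ∈ S`, so he reported truthfully and the pair also blocks `M'` for the
reported preferences, contradicting the stability of deferred acceptance.
-/

/-- State of the patient-proposing deferred-acceptance (Gale–Shapley) algorithm:
`tent d` is the patient tentatively held by doctor `d` (if any), and
`next p` is the index (in patient `p`'s preference list) of the next doctor
that `p` will propose to. -/
structure GSState (n : ℕ) where
  tent : Fin n → Option (Fin n)
  next : Fin n → ℕ

/-- The set of currently free (unmatched) patients. -/
def freeSet {n : ℕ} (s : GSState n) : Finset (Fin n) :=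
  Finset.univ.filter (fun p => ∀ d, s.tent d ≠ some p)

/-- One step of the algorithm: a free patient proposes to the most preferred
doctor not yet proposed to; the doctor holds the better of the proposer and
the currently held patient (lower `drank` value = more preferred). -/
def gsStep {n : ℕ} (plist : Fin n → ℕ → Fin n) (drank : Fin n → Fin n → ℕ)
    (s : GSState n) : GSState n :=
  if h : (freeSet s).Nonempty then
    let p := (freeSet s).min' h
    let d := plist p (s.next p)
    let next' := Function.update s.next p (s.next p + 1)
    match s.tent d with
    | none => ⟨Function.update s.tent d (some p), next'⟩
    | some q =>
        if drank d p < drank d q then ⟨Function.update s.tent d (some p), next'⟩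
        else ⟨s.tent, next'⟩
  else s

/-- Running the algorithm for a given number of steps from the empty state. -/
def gsRun {n : ℕ} (plist : Fin n → ℕ → Fin n) (drank : Fin n → Fin n → ℕ) :
    ℕ → GSState n
  | 0 => ⟨fun _ => none, fun _ => 0⟩
  | k + 1 => gsStep plist drank (gsRun plist drank k)

/-- The final state of the deferred-acceptance algorithm (it stabilizes after
at most `n * n` proposals). -/
def gsFinal (n : ℕ) (plist : Fin n → ℕ → Fin n) (drank : Fin n → Fin n → ℕ) :
    GSState n :=
  gsRun plist drank (n * n + 1)

namespace DeferredAcceptance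

open Finset Function

variable {n : ℕ} {plist : Fin n → ℕ → Fin n} {drank : Fin n → Fin n → ℕ}

theorem gsRun_succ (k : ℕ) :
    gsRun plist drank (k + 1) = gsStep plist drank (gsRun plist drank k) := rfl

theorem gsStep_of_not_nonempty {s : GSState n} (h : ¬ (freeSet s).Nonempty) :
    gsStep plist drank s = s := by
  rw [gsStep, dif_neg h]

/-- `π` proposes to `plist π (s.next π)`, who ends up holding `q`, the better of `π` and her
previous patient. -/
theorem exists_proposer_gsStep {s : GSState n} (h : (freeSet s).Nonempty) :
    ∃ π ∈ freeSet s,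
      (gsStep plist drank s).next = update s.next π (s.next π + 1) ∧
      (∀ d, d ≠ plist π (s.next π) → (gsStep plist drank s).tent d = s.tent d) ∧
      ∃ q, (gsStep plist drank s).tent (plist π (s.next π)) = some q ∧
        drank (plist π (s.next π)) q ≤ drank (plist π (s.next π)) π ∧
        (q = π ∨ s.tent (plist π (s.next π)) = some q) ∧
        ∀ q₀, s.tent (plist π (s.next π)) = some q₀ →
          drank (plist π (s.next π)) q ≤ drank (plist π (s.next π)) q₀ := by
  refine ⟨(freeSet s).min' h, (freeSet s).min'_mem h, ?_⟩
  set π := (freeSet s).min' h with hπ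
  set d := plist π (s.next π) with hd
  rw [gsStep, dif_pos h]
  simp only [← hπ, ← hd]
  split
  · next hnone =>
    refine ⟨rfl, fun e he => update_of_ne he _ _, π, update_self _ _ _, le_rfl, Or.inl rfl, ?_⟩
    simp [hnone]
  · next q₀ hq₀ =>
    split
    · next hlt =>
      refine ⟨rfl, fun e he => update_of_ne he _ _, π, update_self _ _ _, le_rfl, Or.inl rfl,
        ?_⟩
      simp only [hq₀, Option.some.injEq, forall_eq']
      exact hlt.le
    · next hge =>
      refine ⟨rfl, fun _ _ => rfl, q₀, hq₀, not_lt.mp hge, Or.inr hq₀, ?_⟩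
      simp [hq₀]

theorem gsStep_next_eq_or (s : GSState n) (p : Fin n) :
    (gsStep plist drank s).next p = s.next p ∨
      (gsStep plist drank s).next p = s.next p + 1 := by
  by_cases h : (freeSet s).Nonempty
  · obtain ⟨π, -, hnext, -⟩ := exists_proposer_gsStep (drank := drank) h
    rw [hnext, update_apply]
    split_ifs with hp
    · exact Or.inr (hp ▸ rfl)
    · exact Or.inl rfl
  · exact Or.inl (by rw [gsStep_of_not_nonempty h])

theorem eq_of_gsStep_next_ne {s : GSState n} {p q : Fin n}
    (hp : (gsStep plist drank s).next p ≠ s.next p)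
    (hq : (gsStep plist drank s).next q ≠ s.next q) : p = q := by
  by_cases h : (freeSet s).Nonempty
  · obtain ⟨π, -, hnext, -⟩ := exists_proposer_gsStep (drank := drank) h
    have proposer : ∀ r, (gsStep plist drank s).next r ≠ s.next r → r = π := fun r hr => by
      by_contra hrπ
      rw [hnext, update_of_ne hrπ] at hr
      exact hr rfl
    rw [proposer p hp, proposer q hq]
  · rw [gsStep_of_not_nonempty h] at hp
    exact absurd rfl hp

theorem gsRun_next_mono {k l : ℕ} (hkl : k ≤ l) (p : Fin n) :
    (gsRun plist drank k).next p ≤ (gsRun plist drank l).next p := by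
  induction l, hkl using Nat.le_induction with
  | base => exact le_rfl
  | succ l _ ih =>
    have := gsStep_next_eq_or (plist := plist) (drank := drank) (gsRun plist drank l) p
    rw [gsRun_succ]
    omega

theorem exists_gsRun_next_eq_of_lt {p : Fin n} {j N : ℕ}
    (hj : j < (gsRun plist drank N).next p) :
    ∃ k < N, (gsRun plist drank k).next p = j ∧ (gsRun plist drank (k + 1)).next p = j + 1 := by
  induction N with
  | zero => exact absurd hj (Nat.not_lt_zero j)
  | succ N ih =>
    by_cases hN : j < (gsRun plist drank N).next p
    · obtain ⟨k, hk, hkj⟩ := ih hN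
      exact ⟨k, by omega, hkj⟩
    · rw [gsRun_succ] at hj
      have := gsStep_next_eq_or (plist := plist) (drank := drank) (gsRun plist drank N) p
      refine ⟨N, by omega, by omega, ?_⟩
      rw [gsRun_succ]
      omega

theorem injective_of_tent_eq_some {s : GSState n} {M : Fin n → Fin n}
    (hM : ∀ p, s.tent (M p) = some p) : Injective M :=
  fun a a' h => Option.some_injective _ ((hM a).symm.trans (h ▸ hM a'))

structure RunInvariant (plist : Fin n → ℕ → Fin n) (drank : Fin n → Fin n → ℕ)
    (s : GSState n) : Prop where
  held : ∀ d p, s.tent d = some p → 0 < s.next p ∧ plist p (s.next p - 1) = d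
  next_le : ∀ p, s.next p ≤ n
  proposed : ∀ p k, k < s.next p →
    ∃ q, s.tent (plist p k) = some q ∧ drank (plist p k) q ≤ drank (plist p k) p

section Invariant

variable (hplist : ∀ p, Surjective fun k : Fin n => plist p k)
include hplist

/-- If a patient had proposed to all `n` doctors, all of them would hold distinct patients,
so nobody would be free. -/
theorem RunInvariant.next_lt_of_mem_freeSet {s : GSState n} (hI : RunInvariant plist drank s)
    {π : Fin n} (hπ : π ∈ freeSet s) : s.next π < n := by
  refine (hI.next_le π).lt_of_ne fun hπn => ?_
  have hheld : ∀ d, ∃ p, s.tent d = some p := fun d => by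
    obtain ⟨k, rfl⟩ := hplist π d
    obtain ⟨p, hp, -⟩ := hI.proposed π k (by omega)
    exact ⟨p, hp⟩
  choose holder hholder using hheld
  have hinj : Injective holder := fun d d' h => by
    rw [← (hI.held d _ (hholder d)).2, ← (hI.held d' _ (hholder d')).2, h]
  obtain ⟨d, hd⟩ := Finite.injective_iff_surjective.mp hinj π
  exact (mem_filter.mp hπ).2 d (hd ▸ hholder d)

theorem RunInvariant.step {s : GSState n} (hI : RunInvariant plist drank s) :
    RunInvariant plist drank (gsStep plist drank s) := by
  by_cases h : (freeSet s).Nonempty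
  swap
  · rwa [gsStep_of_not_nonempty h]
  obtain ⟨π, hπ, hnext, hother, q, hq, hqπ, hq_src, hq_best⟩ :=
    exists_proposer_gsStep (drank := drank) h
  have hfree := (mem_filter.mp hπ).2
  have hlt := hI.next_lt_of_mem_freeSet hplist hπ
  have hnext_self : (gsStep plist drank s).next π = s.next π + 1 := by rw [hnext, update_self]
  have hnext_ne : ∀ r ≠ π, (gsStep plist drank s).next r = s.next r := fun r hr => by
    rw [hnext, update_of_ne hr]
  refine ⟨fun e r hr => ?_, fun r => ?_, fun r k hk => ?_⟩
  · by_cases he : e = plist π (s.next π)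
    · subst he
      obtain rfl : q = r := Option.some_injective _ (hq.symm.trans hr)
      rcases hq_src with rfl | hq'
      · simp [hnext_self]
      · rw [hnext_ne q fun h => hfree _ (h ▸ hq')]
        exact hI.held _ _ hq'
    · rw [hother e he] at hr
      rw [hnext_ne r fun h => hfree e (h ▸ hr)]
      exact hI.held e r hr
  · rcases eq_or_ne r π with rfl | hr
    · rw [hnext_self]; omega
    · rw [hnext_ne r hr]; exact hI.next_le r
  · have still_held : ∀ k < s.next r,
        ∃ q', (gsStep plist drank s).tent (plist r k) = some q' ∧
          drank (plist r k) q' ≤ drank (plist r k) r := fun k hk => by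
      obtain ⟨q₀, hq₀, hle⟩ := hI.proposed r k hk
      by_cases he : plist r k = plist π (s.next π)
      · rw [he] at hq₀ hle ⊢
        exact ⟨q, hq, (hq_best q₀ hq₀).trans hle⟩
      · exact ⟨q₀, by rw [hother _ he, hq₀], hle⟩
    rcases eq_or_ne r π with rfl | hr
    · rw [hnext_self] at hk
      rcases (Nat.lt_succ_iff.mp hk).lt_or_eq with hk | rfl
      · exact still_held k hk
      · exact ⟨q, hq, hqπ⟩
    · exact still_held k (hnext_ne r hr ▸ hk)

theorem runInvariant_gsRun (k : ℕ) : RunInvariant plist drank (gsRun plist drank k) := by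
  induction k with
  | zero =>
    refine ⟨fun _ _ h => ?_, fun _ => Nat.zero_le n, fun _ _ h => absurd h (Nat.not_lt_zero _)⟩
    simp [gsRun] at h
  | succ k ih => exact ih.step hplist

theorem tent_gsRun_inj {k : ℕ} {d d' p : Fin n} (hd : (gsRun plist drank k).tent d = some p)
    (hd' : (gsRun plist drank k).tent d' = some p) : d = d' := by
  have hI := runInvariant_gsRun (drank := drank) hplist k
  rw [← (hI.held d p hd).2, (hI.held d' p hd').2]

omit hplist in
theorem sum_next_gsStep {s : GSState n} (h : (freeSet s).Nonempty) :
    ∑ p, (gsStep plist drank s).next p = ∑ p, s.next p + 1 := by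
  obtain ⟨π, -, hnext, -⟩ := exists_proposer_gsStep (drank := drank) h
  rw [hnext, sum_update_of_mem (mem_univ π), sum_eq_sum_sdiff_singleton_add (mem_univ π) s.next]
  omega

omit hplist in
/-- Every step taken while some patient is free is a new proposal. -/
theorem freeSet_gsRun_eq_empty_or_le_sum (k : ℕ) :
    freeSet (gsRun plist drank k) = ∅ ∨ k ≤ ∑ p, (gsRun plist drank k).next p := by
  induction k with
  | zero => exact Or.inr (Nat.zero_le _)
  | succ k ih =>
    rw [gsRun_succ]
    by_cases h : (freeSet (gsRun plist drank k)).Nonempty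
    · rw [sum_next_gsStep h]
      rcases ih with h' | h'
      · exact absurd (h' ▸ h) Finset.not_nonempty_empty
      · exact Or.inr (by omega)
    · rw [gsStep_of_not_nonempty h]
      exact Or.inl (not_nonempty_iff_eq_empty.mp h)

theorem freeSet_gsFinal : freeSet (gsFinal n plist drank) = ∅ := by
  refine (freeSet_gsRun_eq_empty_or_le_sum (n * n + 1)).resolve_right fun hle => ?_
  have hsum : ∑ p, (gsRun plist drank (n * n + 1)).next p ≤ n * n := by
    have hI := runInvariant_gsRun (drank := drank) hplist (n * n + 1)
    simpa using sum_le_sum (s := univ) fun p _ => hI.next_le p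
  omega

theorem exists_gsFinal_tent_eq_some :
    ∃ M : Fin n → Fin n, ∀ p, (gsFinal n plist drank).tent (M p) = some p := by
  have hmatched := freeSet_gsFinal (drank := drank) hplist
  simp only [freeSet, filter_eq_empty_iff, mem_univ, true_implies, not_forall, not_not]
    at hmatched
  exact Classical.skolem.mp hmatched

end Invariant

section Rank

variable {prank : Fin n → Fin n → ℕ} (hplist : ∀ p, Surjective fun k : Fin n => plist p k)
  (hprank : ∀ p (k : Fin n), prank p (plist p k) = k)
include hprank

theorem prank_plist {p : Fin n} {j : ℕ} (hj : j < n) : prank p (plist p j) = j :=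
  hprank p ⟨j, hj⟩

include hplist

theorem plist_prank (p d : Fin n) : plist p (prank p d) = d := by
  obtain ⟨k, rfl⟩ := hplist p d
  rw [hprank]

theorem prank_injective (p : Fin n) : Injective (prank p) :=
  LeftInverse.injective (plist_prank hplist hprank p)

theorem prank_add_one_eq_gsRun_next {k : ℕ} {d p : Fin n}
    (h : (gsRun plist drank k).tent d = some p) :
    prank p d + 1 = (gsRun plist drank k).next p := by
  obtain ⟨hpos, hd⟩ := (runInvariant_gsRun hplist k).held d p h
  have hle := (runInvariant_gsRun (drank := drank) hplist k).next_le p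
  rw [← hd, prank_plist hprank (by omega)]
  omega

end Rank

/-- Patient `p` and the doctor `μ m` block the matching `μ : patient → doctor`. -/
def Blocks (prank drank : Fin n → Fin n → ℕ) (μ : Fin n → Fin n) (p m : Fin n) : Prop :=
  prank p (μ m) < prank p (μ p) ∧ drank (μ m) p < drank (μ m) m

def improvers (prank : Fin n → Fin n → ℕ) (M M' : Fin n → Fin n) : Finset (Fin n) :=
  univ.filter fun p => prank p (M' p) < prank p (M p)

@[simp]
theorem mem_improvers {prank : Fin n → Fin n → ℕ} {M M' : Fin n → Fin n} {p : Fin n} :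
    p ∈ improvers prank M M' ↔ prank p (M' p) < prank p (M p) := by
  simp [improvers]

theorem not_blocks_gsFinal {prank : Fin n → Fin n → ℕ}
    (hplist : ∀ p, Surjective fun k : Fin n => plist p k)
    (hprank : ∀ p (k : Fin n), prank p (plist p k) = k) {M : Fin n → Fin n}
    (hM : ∀ p, (gsFinal n plist drank).tent (M p) = some p) (p m : Fin n) :
    ¬ Blocks prank drank M p m := by
  rintro ⟨hpref, hdpref⟩
  have hproposed : prank p (M m) < (gsFinal n plist drank).next p := by
    have := prank_add_one_eq_gsRun_next hplist hprank (hM p)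
    unfold gsFinal
    omega
  obtain ⟨q, hq, hle⟩ := (runInvariant_gsRun hplist _).proposed p _ hproposed
  rw [plist_prank hplist hprank] at hq hle
  obtain rfl : m = q := Option.some_injective _ ((hM m).symm.trans hq)
  omega

section BlockingLemma

variable {prank : Fin n → Fin n → ℕ} {M M' : Fin n → Fin n}

/-- The doctor `M' m` of an improver `m` is matched under `M` to a patient outside the improvers,
who would rather have her than his `M'`-partner; stability of `M` makes her prefer him to `m`. -/
theorem exists_blocks_of_not_mem_image (hprank : ∀ p, Injective (prank p))
    (hdrank : ∀ d, Injective (drank d)) (hM : Surjective M) (hM' : Injective M')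
    (hstable : ∀ p m, ¬ Blocks prank drank M p m) {m : Fin n}
    (hm : m ∈ improvers prank M M') (hmS : M' m ∉ (improvers prank M M').image M) :
    ∃ b ∉ improvers prank M M', ∃ m, Blocks prank drank M' b m := by
  obtain ⟨b, hb⟩ := hM (M' m)
  have hbS : b ∉ improvers prank M M' := fun h => hmS (mem_image.mpr ⟨b, h, hb⟩)
  have hbm : b ≠ m := fun h => hbS (h ▸ hm)
  have hb_pref := not_lt.mp (mem_improvers.not.mp hbS)
  rw [mem_improvers] at hm
  refine ⟨b, hbS, m, ?_, ?_⟩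
  · rw [← hb]
    exact lt_of_le_of_ne hb_pref fun h => hbm (hM' ((hprank b h).symm.trans hb))
  · have hle : drank (M' m) b ≤ drank (M' m) m :=
      not_lt.mp fun h => hstable m b ⟨hb ▸ hm, hb ▸ h⟩
    exact lt_of_le_of_ne hle fun h => hbm (hdrank _ h)

/-- Let `m₁` be the improver who proposes to his `M`-partner `w` last, at step `t`. The
improver `m₂` with `M' m₂ = w` proposed to `w` before step `t`, so just before `t` she holds a
patient `b` she likes at least as much as `m₂`. She rejects `b` at step `t`, so `b` makes his
final proposal later and is no improver, yet prefers `w` to `M b`. -/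
theorem exists_blocks_of_forall_mem_image (hplist : ∀ p, Surjective fun k : Fin n => plist p k)
    (hprank : ∀ p (k : Fin n), prank p (plist p k) = k) (hdrank : ∀ d, Injective (drank d))
    (hM : ∀ p, (gsFinal n plist drank).tent (M p) = some p)
    (hne : (improvers prank M M').Nonempty)
    (hcover : ∀ m ∈ improvers prank M M', ∃ m' ∈ improvers prank M M', M' m' = M m) :
    ∃ b ∉ improvers prank M M', ∃ m, Blocks prank drank M' b m := by
  set S := improvers prank M M'
  have hMinj := injective_of_tent_eq_some hM
  have hfinal (p : Fin n) : prank p (M p) + 1 = (gsRun plist drank (n * n + 1)).next p :=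
    prank_add_one_eq_gsRun_next hplist hprank (hM p)
  have hlast (p : Fin n) : ∃ k < n * n + 1, (gsRun plist drank k).next p = prank p (M p) ∧
      (gsRun plist drank (k + 1)).next p = prank p (M p) + 1 :=
    exists_gsRun_next_eq_of_lt (by rw [← hfinal p]; omega)
  choose T hTN hT hT' using hlast
  obtain ⟨m₁, hm₁, hmax⟩ := S.exists_max_image T hne
  obtain ⟨m₂, hm₂, hw⟩ := hcover m₁ hm₁
  have hm₂_pref := mem_improvers.mp hm₂
  rw [hw] at hm₂_pref
  have hm₂_proposed : prank m₂ (M m₁) < (gsRun plist drank (T m₁)).next m₂ := by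
    have := gsRun_next_mono (plist := plist) (drank := drank) (hmax m₂ hm₂) m₂
    rw [hT m₂] at this
    omega
  obtain ⟨b, hb, hbm₂⟩ := (runInvariant_gsRun hplist (T m₁)).proposed m₂ _ hm₂_proposed
  rw [plist_prank hplist hprank] at hb hbm₂
  have hb_next := prank_add_one_eq_gsRun_next hplist hprank hb
  have hbm₁ : b ≠ m₁ := by
    rintro rfl
    have := hT b
    omega
  have hb_pref : prank b (M m₁) < prank b (M b) := by
    have := gsRun_next_mono (plist := plist) (drank := drank) (hTN m₁).le b
    rw [← hfinal b] at this
    refine lt_of_le_of_ne (by omega) fun h => hbm₁ ?_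
    exact (hMinj (prank_injective hplist hprank b h)).symm
  have hbS : b ∉ S := by
    intro hbS
    rcases (hmax b hbS).lt_or_eq with hlt | heq
    · have := gsRun_next_mono (plist := plist) (drank := drank) (Nat.succ_le_of_lt hlt) b
      rw [hT' b] at this
      omega
    · refine hbm₁ (eq_of_gsStep_next_ne (plist := plist) (drank := drank)
        (s := gsRun plist drank (T m₁)) ?_ ?_)
      · rw [← gsRun_succ, ← heq, hT b, hT' b]; omega
      · rw [← gsRun_succ, hT m₁, hT' m₁]; omega
  refine ⟨b, hbS, m₂, ?_, ?_⟩
  · have := not_lt.mp (mem_improvers.not.mp hbS)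
    rw [hw]
    omega
  · rw [hw]
    exact lt_of_le_of_ne hbm₂ fun h => hbS (hdrank _ h ▸ hm₂)

theorem exists_blocks_of_improvers_nonempty (hplist : ∀ p, Surjective fun k : Fin n => plist p k)
    (hprank : ∀ p (k : Fin n), prank p (plist p k) = k) (hdrank : ∀ d, Injective (drank d))
    (hM : ∀ p, (gsFinal n plist drank).tent (M p) = some p) (hM' : Injective M')
    (hne : (improvers prank M M').Nonempty) :
    ∃ b ∉ improvers prank M M', ∃ m, Blocks prank drank M' b m := by
  set S := improvers prank M M'
  have hMinj := injective_of_tent_eq_some hM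
  by_cases hsub : S.image M' ⊆ S.image M
  · have himage : S.image M' = S.image M := eq_of_subset_of_card_le hsub <| by
      rw [card_image_of_injective _ hM', card_image_of_injective _ hMinj]
    refine exists_blocks_of_forall_mem_image hplist hprank hdrank hM hne fun m hm => ?_
    exact mem_image.mp (himage ▸ mem_image_of_mem M hm)
  · obtain ⟨w, hw, hwS⟩ := not_subset.mp hsub
    obtain ⟨m, hm, rfl⟩ := mem_image.mp hw
    exact exists_blocks_of_not_mem_image (prank_injective hplist hprank) hdrank
      (Finite.injective_iff_surjective.mp hMinj) hM' (not_blocks_gsFinal hplist hprank hM) hm hwS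

end BlockingLemma

end DeferredAcceptance

open DeferredAcceptance

theorem gs_truthful_general (n : ℕ)
    (plist plist' : Fin n → ℕ → Fin n) (prank prank' drank : Fin n → Fin n → ℕ)
    (hplist : ∀ p, Function.Bijective (fun k : Fin n => plist p (k : ℕ)))
    (hplist' : ∀ p, Function.Bijective (fun k : Fin n => plist' p (k : ℕ)))
    (hprank : ∀ p (k : Fin n), prank p (plist p (k : ℕ)) = (k : ℕ))
    (hprank' : ∀ p (k : Fin n), prank' p (plist' p (k : ℕ)) = (k : ℕ))
    (hdinj : ∀ d, Function.Injective (drank d))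
    (p0 : Fin n)
    (hsame' : ∀ q, q ≠ p0 → prank' q = prank q) :
    ∀ d d' : Fin n,
      (gsFinal n plist drank).tent d = some p0 →
      (gsFinal n plist' drank).tent d' = some p0 →
      prank p0 d ≤ prank p0 d' := by
  intro d d' hd hd'
  have hsurj p := (hplist p).surjective
  have hsurj' p := (hplist' p).surjective
  obtain ⟨M, hM⟩ := exists_gsFinal_tent_eq_some (drank := drank) hsurj
  obtain ⟨M', hM'⟩ := exists_gsFinal_tent_eq_some (drank := drank) hsurj'
  rw [tent_gsRun_inj hsurj hd (hM p0), tent_gsRun_inj hsurj' hd' (hM' p0)]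
  by_contra! himproves
  obtain ⟨b, hb, m, hblocks⟩ := exists_blocks_of_improvers_nonempty hsurj hprank hdinj hM
    (injective_of_tent_eq_some hM')
    ⟨p0, mem_improvers.mpr himproves⟩
  have hbp0 : b ≠ p0 := fun h => hb (h ▸ mem_improvers.mpr himproves)
  refine not_blocks_gsFinal hsurj' hprank' hM' b m ?_
  rwa [Blocks, hsame' b hbp0]

/-- truthfulness for the proposing side. If patient `p0`
misreports his preference list (`plist'`, `prank'`) while everyone else is
truthful, the doctor he obtains under the misreport is not strictly better
(under his true preferences `prank p0`) than the doctor he obtains by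
reporting truthfully. -/
theorem gs_truthful (n : ℕ)
    (plist plist' : Fin n → ℕ → Fin n) (prank prank' drank : Fin n → Fin n → ℕ)
    (hplist : ∀ p, Function.Bijective (fun k : Fin n => plist p (k : ℕ)))
    (hplist' : ∀ p, Function.Bijective (fun k : Fin n => plist' p (k : ℕ)))
    (hprank : ∀ p (k : Fin n), prank p (plist p (k : ℕ)) = (k : ℕ))
    (hprank' : ∀ p (k : Fin n), prank' p (plist' p (k : ℕ)) = (k : ℕ))
    (hdinj : ∀ d, Function.Injective (drank d))
    (p0 : Fin n)
    (hsame : ∀ q, q ≠ p0 → plist' q = plist q)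
    (hsame' : ∀ q, q ≠ p0 → prank' q = prank q) :
    ∀ d d' : Fin n,
      (gsFinal n plist drank).tent d = some p0 →
      (gsFinal n plist' drank).tent d' = some p0 →
      prank p0 d ≤ prank p0 d' :=
  gs_truthful_general n plist plist' prank prank' drank hplist hplist' hprank hprank' hdinj p0
    hsame'
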